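/- arXiv:2111.12161 — 4 statements merged into one kernel-verified Lean document; each statement's English description precedes it below -/
import Mathlib

section
/- Suppose a distribution P over (X,U,T,Y(0),Y(1)) satisfies the marginal Γ-selection condition and (Y(1),Y(0)) ⊥ T | (X,U). Then for each t ∈ {0,1}, the Radon–Nikodym derivative of the conditional law of Y(t) given X and T=t with respect to the conditional law of Y(t) given X and T=1−t satisfies 1/Γ ≤ dP_{Y(t)|X,T=t}/dP_{Y(t)|X,T=1−t}(x,y) ≤ Γ for P-almost all (x,y). -/
/-!
By Bayes' rule the law of `U` given `X = x, T = 1` has a density against its law given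
`X = x, T = 0`, namely the odds ratio of the two propensity scores, which Γ-selection confines to
`[1/Γ, Γ]`; so each of the two confounder laws is at most `Γ` times the other. By unconfoundedness
the outcome laws given `T = 0` and `T = 1` mix the same kernel `u ↦ ρ t x u` against these two
laws, so each of them is again at most `Γ` times the other. Finally `μ ≤ Γ • ν` bounds `dμ/dν`
by `Γ`, and `ν ≤ Γ • μ` bounds it below by `1/Γ` since `dμ/dν = (dν/dμ)⁻¹`.
-/

open MeasureTheory ENNReal

namespace MeasureTheory.Measure

variable {α β : Type*} [MeasurableSpace α] [MeasurableSpace β] {μ ν : Measure α} {c : ℝ≥0∞}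

lemma withDensity_le_smul_of_ae_le {f : α → ℝ≥0∞} (hf : ∀ᵐ x ∂μ, f x ≤ c) :
    μ.withDensity f ≤ c • μ :=
  withDensity_const (μ := μ) c ▸ withDensity_mono hf

lemma le_smul_withDensity_of_ae_inv_le {f : α → ℝ≥0∞} (hc₀ : c ≠ 0) (hc : c ≠ ∞)
    (hf : ∀ᵐ x ∂μ, c⁻¹ ≤ f x) : μ ≤ c • μ.withDensity f := by
  rw [← withDensity_smul' c f hc]
  calc μ = μ.withDensity 1 := withDensity_one.symm
    _ ≤ μ.withDensity (c • f) := withDensity_mono <| hf.mono fun x hx => by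
        simpa [ENNReal.mul_inv_cancel hc₀ hc] using mul_le_mul_right hx c

lemma bind_le_smul_bind {m m' : Measure α} {κ : α → Measure β} (h : m ≤ c • m')
    (hκ : AEMeasurable κ m') : m.bind κ ≤ c • m'.bind κ := by
  rw [← bind_smul]
  refine le_iff.2 fun s hs => ?_
  simp only [bind, join_apply hs]
  exact lintegral_mono' (map_mono_of_aemeasurable h (hκ.mono_ac smul_absolutelyContinuous)) le_rfl

lemma rnDeriv_le_of_le_smul [SigmaFinite ν] (h : μ ≤ c • ν) : ∀ᵐ x ∂ν, μ.rnDeriv ν x ≤ c :=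
  ae_le_of_forall_setLIntegral_le_of_sigmaFinite (μ.measurable_rnDeriv ν) fun s _ _ => by
    rw [setLIntegral_const]
    exact (setLIntegral_rnDeriv_le s).trans (h s)

lemma inv_le_rnDeriv_of_le_smul [SigmaFinite μ] [SigmaFinite ν] (h : ν ≤ c • μ) :
    ∀ᵐ x ∂ν, c⁻¹ ≤ μ.rnDeriv ν x := by
  have hνμ : ν ≪ μ := absolutelyContinuous_of_le_smul h
  filter_upwards [inv_rnDeriv hνμ, hνμ.ae_le (rnDeriv_le_of_le_smul h)] with x hinv hle
  rw [← hinv]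
  exact ENNReal.inv_le_inv.2 hle

lemma rnDeriv_toReal_mem_of_le_smul [SigmaFinite μ] [SigmaFinite ν] {Γ : ℝ} (hΓ : 0 < Γ)
    (hμν : μ ≤ ENNReal.ofReal Γ • ν) (hνμ : ν ≤ ENNReal.ofReal Γ • μ) :
    ∀ᵐ x ∂ν, (μ.rnDeriv ν x).toReal ∈ Set.Icc (1 / Γ) Γ := by
  filter_upwards [inv_le_rnDeriv_of_le_smul hνμ, rnDeriv_le_of_le_smul hμν] with x hlow hup
  refine ⟨?_, ENNReal.toReal_le_of_le_ofReal hΓ.le hup⟩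
  rw [one_div, ← ENNReal.ofReal_le_iff_le_toReal (ne_top_of_le_ne_top ofReal_ne_top hup),
    ENNReal.ofReal_inv_of_pos hΓ]
  exact hlow

end MeasureTheory.Measure

open Measure

theorem conditional_counterfactual_rnDeriv_bounds_general
    {𝒳 𝒰 : Type*} [MeasurableSpace 𝒳] [MeasurableSpace 𝒰]
    (μX : Measure 𝒳)
    (ν : 𝒳 → Bool → Measure 𝒰)          -- conditional law of U given X = x, T = w
    (hν : ∀ x w, IsProbabilityMeasure (ν x w))
    (ρ : Bool → 𝒳 → 𝒰 → Measure ℝ)      -- conditional law of Y(t) given X = x, U = u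
    (hρ : ∀ t x u, IsProbabilityMeasure (ρ t x u))
    (lawY : Bool → Bool → 𝒳 → Measure ℝ) -- lawY t w x = law of Y(t) given X = x, T = w
    (e : 𝒳 → 𝒰 → ℝ)                      -- e x u = P(T = 1 | X = x, U = u)
    (eX : 𝒳 → ℝ)                         -- eX x = P(T = 1 | X = x)
    (Γ : ℝ) (hΓ : 1 ≤ Γ)
    -- unconfoundedness (Y(1), Y(0)) ⟂ T | (X, U): the conditional law of Y(t) given
    -- (X, U) does not depend on T, and mixing over U | X, T = w gives lawY t w x
    (hmix : ∀ t w x, lawY t w x = (ν x w).bind (ρ t x))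
    -- Bayes rule for the conditional laws of the confounder
    (hbayes : ∀ᵐ x ∂μX, ν x true
      = (ν x false).withDensity (fun u =>
          ENNReal.ofReal ((e x u / (1 - e x u)) * ((1 - eX x) / eX x))))
    -- marginal Γ-selection condition
    (hsel : ∀ᵐ x ∂μX, ∀ᵐ u ∂(ν x false),
      1 / Γ ≤ (e x u / (1 - e x u)) / (eX x / (1 - eX x)) ∧
        (e x u / (1 - e x u)) / (eX x / (1 - eX x)) ≤ Γ) :
    ∀ t : Bool, ∀ᵐ x ∂μX, ∀ᵐ y ∂(lawY t (!t) x),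
      1 / Γ ≤ ((lawY t t x).rnDeriv (lawY t (!t) x) y).toReal ∧
        ((lawY t t x).rnDeriv (lawY t (!t) x) y).toReal ≤ Γ := by
  have hΓ₀ : 0 < Γ := one_pos.trans_le hΓ
  intro t
  filter_upwards [hbayes, hsel] with x hb hs
  set odds : 𝒰 → ℝ≥0∞ := fun u => ENNReal.ofReal ((e x u / (1 - e x u)) * ((1 - eX x) / eX x))
  have hodds : ∀ᵐ u ∂(ν x false), (ENNReal.ofReal Γ)⁻¹ ≤ odds u ∧ odds u ≤ ENNReal.ofReal Γ := by
    filter_upwards [hs] with u hu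
    rw [div_div_eq_mul_div, mul_div_assoc] at hu
    rw [← ENNReal.ofReal_inv_of_pos hΓ₀, ← one_div]
    exact ⟨ENNReal.ofReal_le_ofReal hu.1, ENNReal.ofReal_le_ofReal hu.2⟩
  have hU : ∀ w, ν x w ≤ ENNReal.ofReal Γ • ν x (!w) := by
    rintro (_ | _) <;> simp only [Bool.not_false, Bool.not_true] <;> rw [hb]
    · exact le_smul_withDensity_of_ae_inv_le (by simpa using hΓ₀) ofReal_ne_top
        (hodds.mono fun _ h => h.1)
    · exact withDensity_le_smul_of_ae_le (hodds.mono fun _ h => h.2)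
  by_cases hκ : AEMeasurable (ρ t x) (ν x (!t))
  · have hκ' : AEMeasurable (ρ t x) (ν x t) := hκ.mono_ac (absolutelyContinuous_of_le_smul (hU t))
    have := hν x t
    have := hν x (!t)
    have := isProbabilityMeasure_bind hκ (ae_of_all _ (hρ t x))
    have := isProbabilityMeasure_bind hκ' (ae_of_all _ (hρ t x))
    rw [hmix, hmix]
    exact rnDeriv_toReal_mem_of_le_smul hΓ₀ (bind_le_smul_bind (hU t) hκ)
      (bind_le_smul_bind (by simpa using hU (!t)) hκ')
  · -- `Measure.bind` along a kernel that is not a.e.-measurable is the junk value `0`.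
    simp [hmix, Measure.bind, map_of_not_aemeasurable hκ]

/-- Lemma 1 of the paper: under the marginal Γ-selection condition and
unconfoundedness given `(X, U)`, for each `t ∈ {0,1}` the Radon–Nikodym derivative of the
conditional law of `Y(t)` given `X, T = t` with respect to the one given `X, T = 1 - t`
lies in `[1/Γ, Γ]` almost surely. -/
theorem conditional_counterfactual_rnDeriv_bounds
    {𝒳 𝒰 : Type*} [MeasurableSpace 𝒳] [MeasurableSpace 𝒰]
    (μX : Measure 𝒳) [IsProbabilityMeasure μX]
    (ν : 𝒳 → Bool → Measure 𝒰)          -- conditional law of U given X = x, T = w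
    (hν : ∀ x w, IsProbabilityMeasure (ν x w))
    (ρ : Bool → 𝒳 → 𝒰 → Measure ℝ)      -- conditional law of Y(t) given X = x, U = u
    (hρ : ∀ t x u, IsProbabilityMeasure (ρ t x u))
    (lawY : Bool → Bool → 𝒳 → Measure ℝ) -- lawY t w x = law of Y(t) given X = x, T = w
    (e : 𝒳 → 𝒰 → ℝ)                      -- e x u = P(T = 1 | X = x, U = u)
    (eX : 𝒳 → ℝ)                         -- eX x = P(T = 1 | X = x)
    (Γ : ℝ) (hΓ : 1 ≤ Γ)
    (he : ∀ x u, 0 < e x u ∧ e x u < 1)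
    (heX : ∀ x, 0 < eX x ∧ eX x < 1)
    -- unconfoundedness (Y(1), Y(0)) ⟂ T | (X, U): the conditional law of Y(t) given
    -- (X, U) does not depend on T, and mixing over U | X, T = w gives lawY t w x
    (hmix : ∀ t w x, lawY t w x = (ν x w).bind (ρ t x))
    -- Bayes rule for the conditional laws of the confounder
    (hbayes : ∀ᵐ x ∂μX, ν x true
      = (ν x false).withDensity (fun u =>
          ENNReal.ofReal ((e x u / (1 - e x u)) * ((1 - eX x) / eX x))))
    -- marginal Γ-selection condition
    (hsel : ∀ᵐ x ∂μX, ∀ᵐ u ∂(ν x false),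
      1 / Γ ≤ (e x u / (1 - e x u)) / (eX x / (1 - eX x)) ∧
        (e x u / (1 - e x u)) / (eX x / (1 - eX x)) ≤ Γ) :
    ∀ t : Bool, ∀ᵐ x ∂μX, ∀ᵐ y ∂(lawY t (!t) x),
      1 / Γ ≤ ((lawY t t x).rnDeriv (lawY t (!t) x) y).toReal ∧
        ((lawY t t x).rnDeriv (lawY t (!t) x) y).toReal ≤ Γ :=
  conditional_counterfactual_rnDeriv_bounds_general μX ν hν ρ hρ lawY e eX Γ hΓ hmix hbayes hsel
end

section
/- Let (X_1,Y_1),…,(X_n,Y_n) be i.i.d. from P and (X_{n+1},Y_{n+1}) ~ P̃ independent, with likelihood ratio w(x,y) = dP̃/dP(x,y). Suppose ℓ̂ and û are measurable functions of x with 0 < ℓ̂(x) ≤ û(x), satisfying ℓ̂(X) ≤ w(X,Y) ≤ û(X) P-almost surely. Let V be a fixed score function, V_i = V(X_i,Y_i), let V_{[1]} ≤ … ≤ V_{[n]} be the ordered scores with corresponding ℓ_{[i]} = ℓ̂(X_{[i]}), u_{[i]} = û(X_{[i]}), u_{n+1} = û(X_{n+1}), define F̂(k) = (Σ_{i≤k}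 ℓ_{[i]}) / (Σ_{i≤k} ℓ_{[i]} + Σ_{i>k} u_{[i]} + u_{n+1}), k* = min{k : F̂(k) ≥ 1−α}, and Ĉ(X_{n+1}) = {y : V(X_{n+1},y) ≤ V_{[k*]}}. Then P̃(Y_{n+1} ∈ Ĉ(X_{n+1})) ≥ 1−α. -/
open MeasureTheory Finset
open scoped ENNReal

/-!
If the test point is missed, then on the augmented sample `Z_1, …, Z_{n+1}` the ratio `F̂` at the
test score (lower bounds below it, upper bounds at or above it, the test point included) is at
least `1 - α`, because `F̂` increases along the sorted scores.  For a fixed sample, at most a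
fraction `α` of the total weight `∑ w(Z_j)` sits on points with this property: they all score at
least as high as the lowest of them, and its ratio bounds their weight by `α` times the total.
Since `P̃ = w • P`, the miscoverage probability is `E_P[w(Z_{n+1}) 1{Z_{n+1} bad}]`; by
exchangeability this is the average over the `n + 1` positions, hence at most
`α E_P[∑ w(Z_j)] / (n + 1) = α`.
-/

/-- The thresholding function `F̂(k)` of Algorithm 1, computed from (already sorted)
lower bounds `l`, upper bounds `u` and the test-point upper bound `ulast`. -/
noncomputable def Fhat {n : ℕ} (l u : Fin n → ℝ) (ulast : ℝ) (k : ℕ) : ℝ :=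
  (∑ i ∈ univ.filter (fun i : Fin n => (i : ℕ) < k), l i) /
    ((∑ i ∈ univ.filter (fun i : Fin n => (i : ℕ) < k), l i) +
      (∑ i ∈ univ.filter (fun i : Fin n => k ≤ (i : ℕ)), u i) + ulast)

/-- The event that the robust weighted conformal prediction set
`Ĉ(X_{n+1}) = {y : V(X_{n+1}, y) ≤ V_{[k*]}}`, built from the calibration data `d` with
bound functions `lh, uh`, covers the test point `z`.  A permutation `π` sorts the scores;
if `F̂(k) < 1 - α` for every `k ≤ n` then `k*` does not exist and `Ĉ` is everything,
otherwise `k* = min {k : F̂(k) ≥ 1 - α}` and coverage means `V(z) ≤ V_{[k*]}`. -/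
def Covered {𝒳 𝒴 : Type*} (n : ℕ) (V : 𝒳 × 𝒴 → ℝ) (lh uh : 𝒳 → ℝ) (α : ℝ)
    (d : Fin n → 𝒳 × 𝒴) (z : 𝒳 × 𝒴) : Prop :=
  ∃ π : Equiv.Perm (Fin n),
    Monotone (fun i : Fin n => V (d (π i))) ∧
    ((∀ k, 1 ≤ k → k ≤ n →
        Fhat (fun i => lh (d (π i)).1) (fun i => uh (d (π i)).1) (uh z.1) k < 1 - α) ∨
      (∃ k, 1 ≤ k ∧ k ≤ n ∧
        1 - α ≤ Fhat (fun i => lh (d (π i)).1) (fun i => uh (d (π i)).1) (uh z.1) k ∧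
        (∀ j, 1 ≤ j → j < k →
          Fhat (fun i => lh (d (π i)).1) (fun i => uh (d (π i)).1) (uh z.1) j < 1 - α) ∧
        ∃ hk : k - 1 < n, V z ≤ V (d (π ⟨k - 1, hk⟩))))

section WeightRatio

variable {ι : Type*} [Fintype ι] [DecidableEq ι]

noncomputable def weightRatio (l u : ι → ℝ) (c : ℝ) (T : Finset ι) : ℝ :=
  (∑ i ∈ T, l i) / (∑ i ∈ T, l i + ∑ i ∈ Tᶜ, u i + c)

theorem Fhat_eq_weightRatio {n : ℕ} (l u : Fin n → ℝ) (c : ℝ) (k : ℕ) :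
    Fhat l u c k = weightRatio l u c (univ.filter fun i : Fin n => (i : ℕ) < k) := by
  simp only [Fhat, weightRatio, compl_filter, not_lt]

theorem weightRatio_comp_equiv {κ : Type*} [Fintype κ] [DecidableEq κ] (e : κ ≃ ι)
    (l u : ι → ℝ) (c : ℝ) (p : ι → Prop) [DecidablePred p] :
    weightRatio (l ∘ e) (u ∘ e) c (univ.filter (p ∘ e)) = weightRatio l u c (univ.filter p) := by
  simp only [weightRatio, compl_filter, sum_filter, Function.comp_apply,
    e.sum_comp fun i => if p i then l i else 0, e.sum_comp fun i => if ¬p i then u i else 0]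

theorem weightRatio_mono {l u : ι → ℝ} {c : ℝ} (hl : 0 ≤ l) (hlu : l ≤ u) (hc : 0 < c)
    {T T' : Finset ι} (hT : T ⊆ T') : weightRatio l u c T ≤ weightRatio l u c T' := by
  have hL : ∑ i ∈ T' \ T, l i + ∑ i ∈ T, l i = ∑ i ∈ T', l i := sum_sdiff hT
  have hU : ∑ i ∈ T' \ T, u i + ∑ i ∈ T'ᶜ, u i = ∑ i ∈ Tᶜ, u i := by
    rw [← compl_sdiff_compl]
    exact sum_sdiff (compl_subset_compl.mpr hT)
  have hmid : ∑ i ∈ T' \ T, l i ≤ ∑ i ∈ T' \ T, u i := sum_le_sum fun i _ => hlu i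
  have hLT : 0 ≤ ∑ i ∈ T, l i := sum_nonneg fun i _ => hl i
  have hLsd : 0 ≤ ∑ i ∈ T' \ T, l i := sum_nonneg fun i _ => hl i
  have hU' : 0 ≤ ∑ i ∈ T'ᶜ, u i := sum_nonneg fun i _ => (hl i).trans (hlu i)
  exact div_le_div₀ (by linarith) (by linarith) (by linarith) (by linarith)

theorem sum_weight_filter_le_mul_sum {v l u w : ι → ℝ} {α : ℝ} (hα₀ : 0 ≤ α) (hα₁ : α < 1)
    (hl : 0 ≤ l) (hlw : l ≤ w) (hwu : w ≤ u) :
    ∑ j ∈ univ.filter (fun j => 1 - α ≤ weightRatio l u 0 (univ.filter fun i => v i < v j)), w j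
      ≤ α * ∑ j, w j := by
  set S := univ.filter fun j => 1 - α ≤ weightRatio l u 0 (univ.filter fun i => v i < v j)
  have hw : 0 ≤ w := hl.trans hlw
  rcases S.eq_empty_or_nonempty with hS | hS
  · rw [hS, sum_empty]
    exact mul_nonneg hα₀ (sum_nonneg fun j _ => hw j)
  obtain ⟨j₀, hj₀, hmin⟩ := S.exists_min_image v hS
  set T := univ.filter fun i => v i < v j₀
  set L := ∑ i ∈ T, l i
  set U := ∑ i ∈ Tᶜ, u i
  have hratio : 1 - α ≤ L / (L + U) := by
    simpa only [weightRatio, add_zero] using (mem_filter.mp hj₀).2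
  have hL : 0 ≤ L := sum_nonneg fun i _ => hl i
  have hU : 0 ≤ U := sum_nonneg fun i _ => hw i |>.trans (hwu i)
  have hD : 0 < L + U := by
    refine lt_of_le_of_ne (by linarith) fun h => ?_
    rw [← h, div_zero] at hratio
    linarith
  have hST : S ⊆ Tᶜ := fun j hj => by simpa [T] using hmin j hj
  have hkey : (1 - α) * U ≤ α * L := by nlinarith [(le_div_iff₀ hD).mp hratio]
  have hA : ∑ j ∈ S, w j ≤ ∑ j ∈ Tᶜ, w j := sum_le_sum_of_subset_of_nonneg hST fun j _ _ => hw j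
  have hAU : ∑ j ∈ Tᶜ, w j ≤ U := sum_le_sum fun i _ => hwu i
  have hLB : L ≤ ∑ j ∈ T, w j := sum_le_sum fun i _ => hlw i
  rw [← sum_add_sum_compl T w]
  nlinarith

end WeightRatio

section Sample

variable {Z ι : Type*} [Fintype ι] [DecidableEq ι]

noncomputable def scoreRatio (V l u : Z → ℝ) (s : ι → Z) (t : ℝ) : ℝ :=
  weightRatio (l ∘ s) (u ∘ s) 0 (univ.filter fun i => V (s i) < t)

theorem scoreRatio_comp_equiv (V l u : Z → ℝ) (e : Equiv.Perm ι) (s : ι → Z) (t : ℝ) :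
    scoreRatio V l u (s ∘ e) t = scoreRatio V l u s t :=
  weightRatio_comp_equiv e (l ∘ s) (u ∘ s) 0 fun i => V (s i) < t

theorem scoreRatio_snoc {n : ℕ} (V l u : Z → ℝ) (d : Fin n → Z) (z : Z) :
    scoreRatio V l u (Fin.snoc d z : Fin (n + 1) → Z) (V z)
      = weightRatio (l ∘ d) (u ∘ d) (u z) (univ.filter fun i => V (d i) < V z) := by
  simp [scoreRatio, weightRatio, compl_filter, sum_filter, Fin.sum_univ_castSucc, add_assoc]

theorem measurable_scoreRatio [MeasurableSpace Z] {V l u : Z → ℝ} (hV : Measurable V)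
    (hl : Measurable l) (hu : Measurable u) :
    Measurable fun p : (ι → Z) × ℝ => scoreRatio V l u p.1 p.2 := by
  simp only [scoreRatio, weightRatio, compl_filter, sum_filter, Function.comp_apply, add_zero]
  have hlt : ∀ i, MeasurableSet {p : (ι → Z) × ℝ | V (p.1 i) < p.2} := fun i =>
    measurableSet_lt (hV.comp ((measurable_pi_apply i).comp measurable_fst)) measurable_snd
  have hsum : ∀ f : Z → ℝ, Measurable f → ∀ q : ((ι → Z) × ℝ) → ι → Prop,
      (∀ i, MeasurableSet {p | q p i}) → ∀ [∀ p i, Decidable (q p i)],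
      Measurable fun p => ∑ i, if q p i then f (p.1 i) else 0 := by
    intro f hf q hq _
    exact Finset.measurable_sum _ fun i _ =>
      Measurable.ite (hq i) (hf.comp ((measurable_pi_apply i).comp measurable_fst)) measurable_const
  have hL := hsum l hl _ hlt
  exact hL.div (hL.add (hsum u hu _ fun i => (hlt i).compl))

theorem measurableSet_one_sub_le_scoreRatio [MeasurableSpace Z] {V l u : Z → ℝ}
    (hV : Measurable V) (hl : Measurable l) (hu : Measurable u) (α : ℝ) (j : ι) :
    MeasurableSet {s : ι → Z | 1 - α ≤ scoreRatio V l u s (V (s j))} :=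
  measurableSet_le measurable_const <|
    (measurable_scoreRatio hV hl hu).comp (measurable_id.prodMk (hV.comp (measurable_pi_apply j)))

theorem sum_indicator_one_sub_le_scoreRatio_le {V l u w : Z → ℝ} {α : ℝ} (hα₀ : 0 ≤ α)
    (hα₁ : α < 1) (hl₀ : ∀ z, 0 ≤ l z) {s : ι → Z}
    (hs : ∀ k, l (s k) ≤ w (s k) ∧ w (s k) ≤ u (s k)) :
    ∑ k, {s | 1 - α ≤ scoreRatio V l u s (V (s k))}.indicator (fun s => ENNReal.ofReal (w (s k))) s
      ≤ ENNReal.ofReal α * ∑ k, ENNReal.ofReal (w (s k)) := by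
  have hw₀ : ∀ k, 0 ≤ w (s k) := fun k => (hl₀ _).trans (hs k).1
  simp only [Set.indicator_apply, Set.mem_ofPred_eq, ← sum_filter]
  rw [← ENNReal.ofReal_sum_of_nonneg fun k _ => hw₀ k,
    ← ENNReal.ofReal_sum_of_nonneg fun k _ => hw₀ k, ← ENNReal.ofReal_mul hα₀]
  exact ENNReal.ofReal_le_ofReal <| sum_weight_filter_le_mul_sum (v := V ∘ s) hα₀ hα₁
    (fun k => hl₀ (s k)) (fun k => (hs k).1) (fun k => (hs k).2)

end Sample

theorem one_sub_le_weightRatio_of_not_covered {𝒳 𝒴 : Type*} {n : ℕ} {V : 𝒳 × 𝒴 → ℝ}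
    {lh uh : 𝒳 → ℝ} {α : ℝ} (hlpos : ∀ x, 0 < lh x) (hlu : ∀ x, lh x ≤ uh x)
    {d : Fin n → 𝒳 × 𝒴} {z : 𝒳 × 𝒴} (h : ¬ Covered n V lh uh α d z) :
    1 - α ≤ weightRatio (fun i => lh (d i).1) (fun i => uh (d i).1) (uh z.1)
      (univ.filter fun i => V (d i) < V z) := by
  classical
  set π := Tuple.sort fun i => V (d i)
  have hπ : Monotone fun i => V (d (π i)) := Tuple.monotone_sort fun i => V (d i)
  set F := Fhat (fun i => lh (d (π i)).1) (fun i => uh (d (π i)).1) (uh z.1)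
  have hex : ∃ k, 1 ≤ k ∧ k ≤ n ∧ 1 - α ≤ F k := by
    by_contra! hno
    exact h ⟨π, hπ, Or.inl hno⟩
  set k := Nat.find hex
  obtain ⟨hk1, hkn, hkF⟩ : 1 ≤ k ∧ k ≤ n ∧ 1 - α ≤ F k := Nat.find_spec hex
  have hmin : ∀ j, 1 ≤ j → j < k → F j < 1 - α := fun j hj1 hjk => by
    by_contra! hj
    exact Nat.find_min hex hjk ⟨hj1, hjk.le.trans hkn, hj⟩
  have hlt : V (d (π ⟨k - 1, by omega⟩)) < V z := by
    by_contra! hle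
    exact h ⟨π, hπ, Or.inr ⟨k, hk1, hkn, hkF, hmin, by omega, hle⟩⟩
  have hsub : univ.filter (fun i : Fin n => (i : ℕ) < k) ⊆ univ.filter fun i => V (d (π i)) < V z := by
    intro i hi
    simp only [mem_filter, mem_univ, true_and] at hi ⊢
    exact (hπ (show i ≤ ⟨k - 1, by omega⟩ from Fin.mk_le_mk.mpr (by omega))).trans_lt hlt
  calc 1 - α ≤ F k := hkF
    _ ≤ weightRatio (fun i => lh (d (π i)).1) (fun i => uh (d (π i)).1) (uh z.1)
          (univ.filter fun i => V (d (π i)) < V z) := by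
      refine (Fhat_eq_weightRatio _ _ _ k).trans_le (weightRatio_mono ?_ ?_ ?_ hsub)
      exacts [fun i => (hlpos _).le, fun i => hlu _, (hlpos _).trans_le (hlu _)]
    _ = _ := weightRatio_comp_equiv π (fun i => lh (d i).1) (fun i => uh (d i).1) (uh z.1)
          fun i => V (d i) < V z

section Exchangeable

variable {Z : Type*} [MeasurableSpace Z] (P : Measure Z)

theorem lintegral_pi_eq_of_equivariant [SigmaFinite P] {ι : Type*} [Fintype ι]
    {f : (ι → Z) → ι → ℝ≥0∞} (hf : ∀ (e : Equiv.Perm ι) s j, f (s ∘ e) j = f s (e j)) (j k : ι) :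
    ∫⁻ s, f s j ∂Measure.pi (fun _ => P) = ∫⁻ s, f s k ∂Measure.pi (fun _ => P) := by
  classical
  have hcomp : ∀ (e : Equiv.Perm ι) s, MeasurableEquiv.piCongrLeft (fun _ => Z) e s = s ∘ e.symm :=
    fun e s => by ext i; simp [MeasurableEquiv.piCongrLeft, Equiv.piCongrLeft_apply]
  rw [← (measurePreserving_piCongrLeft (fun _ => P) (Equiv.swap j k)).lintegral_comp_emb
    (MeasurableEquiv.measurableEmbedding _) fun s => f s k]
  simp only [hcomp, hf, Equiv.symm_swap, Equiv.swap_apply_right]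

theorem measurePreserving_snoc [SigmaFinite P] (n : ℕ) :
    MeasurePreserving (fun p : (Fin n → Z) × Z => (Fin.snoc p.1 p.2 : Fin (n + 1) → Z))
      ((Measure.pi fun _ => P).prod P) (Measure.pi fun _ => P) := by
  have h := (measurePreserving_piFinSuccAbove (fun _ : Fin (n + 1) => P) (Fin.last n)).symm.comp
    (Measure.measurePreserving_swap (μ := Measure.pi fun _ : Fin n => P) (ν := P))
  convert h using 1
  ext p i
  simp [MeasurableEquiv.piFinSuccAbove_symm_apply]

theorem prod_withDensity_snoc_preimage [SigmaFinite P] {n : ℕ} {g : Z → ℝ≥0∞} (hg : Measurable g)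
    {E : Set (Fin (n + 1) → Z)} (hE : MeasurableSet E) :
    ((Measure.pi fun _ => P).prod (P.withDensity g))
        ((fun p : (Fin n → Z) × Z => (Fin.snoc p.1 p.2 : Fin (n + 1) → Z)) ⁻¹' E)
      = ∫⁻ s in E, g (s (Fin.last n)) ∂Measure.pi fun _ => P := by
  have hsnoc := measurePreserving_snoc P n
  rw [prod_withDensity_right hg, withDensity_apply _ (hsnoc.measurable hE),
    ← hsnoc.setLIntegral_comp_preimage hE (f := fun s => g (s (Fin.last n)))
      (hg.comp (measurable_pi_apply _))]
  simp only [Fin.snoc_last]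

variable [IsProbabilityMeasure P]

theorem setLIntegral_one_sub_le_scoreRatio_le {ι : Type*} [Fintype ι] [DecidableEq ι]
    {V l u w : Z → ℝ} (hV : Measurable V) (hl : Measurable l) (hu : Measurable u)
    (hw : Measurable w) (hl₀ : ∀ z, 0 ≤ l z) (hbound : ∀ᵐ z ∂P, l z ≤ w z ∧ w z ≤ u z)
    {α : ℝ} (hα₀ : 0 ≤ α) (hα₁ : α < 1) (j : ι) :
    ∫⁻ s in {s | 1 - α ≤ scoreRatio V l u s (V (s j))}, ENNReal.ofReal (w (s j))
        ∂Measure.pi (fun _ => P)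
      ≤ ENNReal.ofReal α * ∫⁻ z, ENNReal.ofReal (w z) ∂P := by
  rw [← lintegral_indicator (measurableSet_one_sub_le_scoreRatio hV hl hu α j)]
  set μ := Measure.pi fun _ : ι => P
  set f : (ι → Z) → ι → ℝ≥0∞ := fun s k =>
    {s | 1 - α ≤ scoreRatio V l u s (V (s k))}.indicator (fun s => ENNReal.ofReal (w (s k))) s
  have hf_perm : ∀ (e : Equiv.Perm ι) s k, f (s ∘ e) k = f s (e k) := fun e s k => by
    simp only [f, Set.indicator_apply, Set.mem_ofPred_eq, Function.comp_apply, scoreRatio_comp_equiv]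
  have hw_meas : ∀ k, Measurable fun s : ι → Z => ENNReal.ofReal (w (s k)) := fun k =>
    ENNReal.measurable_ofReal.comp (hw.comp (measurable_pi_apply k))
  have hf_meas : ∀ k, Measurable (f · k) := fun k =>
    (hw_meas k).indicator (measurableSet_one_sub_le_scoreRatio hV hl hu α k)
  have hsample : ∀ᵐ s ∂μ, ∀ k, l (s k) ≤ w (s k) ∧ w (s k) ≤ u (s k) :=
    ae_all_iff.mpr fun k => (measurePreserving_eval (fun _ => P) k).quasiMeasurePreserving.ae hbound
  have hpointwise : ∀ᵐ s ∂μ, ∑ k, f s k ≤ ENNReal.ofReal α * ∑ k, ENNReal.ofReal (w (s k)) :=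
    hsample.mono fun s hs => sum_indicator_one_sub_le_scoreRatio_le hα₀ hα₁ hl₀ hs
  have hcard : (Fintype.card ι : ℝ≥0∞) ≠ 0 := Nat.cast_ne_zero.mpr (Fintype.card_pos_iff.mpr ⟨j⟩).ne'
  refine (ENNReal.mul_le_mul_iff_right hcard (ENNReal.natCast_ne_top _)).mp ?_
  calc (Fintype.card ι : ℝ≥0∞) * ∫⁻ s, f s j ∂μ = ∑ k, ∫⁻ s, f s k ∂μ := by
        rw [sum_congr rfl fun k _ => lintegral_pi_eq_of_equivariant P hf_perm k j, sum_const,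
          card_univ, nsmul_eq_mul]
    _ = ∫⁻ s, ∑ k, f s k ∂μ := (lintegral_finsetSum _ fun k _ => hf_meas k).symm
    _ ≤ ∫⁻ s, ENNReal.ofReal α * ∑ k, ENNReal.ofReal (w (s k)) ∂μ := lintegral_mono_ae hpointwise
    _ = ENNReal.ofReal α * ∑ k, ∫⁻ s, ENNReal.ofReal (w (s k)) ∂μ := by
        rw [lintegral_const_mul _ (Finset.measurable_sum _ fun k _ => hw_meas k),
          lintegral_finsetSum _ fun k _ => hw_meas k]
    _ = (Fintype.card ι : ℝ≥0∞) * (ENNReal.ofReal α * ∫⁻ z, ENNReal.ofReal (w z) ∂P) := by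
        have hmarginal : ∀ k, ∫⁻ s, ENNReal.ofReal (w (s k)) ∂μ = ∫⁻ z, ENNReal.ofReal (w z) ∂P :=
          fun k => (measurePreserving_eval (fun _ => P) k).lintegral_comp
            (f := fun z => ENNReal.ofReal (w z)) (ENNReal.measurable_ofReal.comp hw)
        rw [sum_congr rfl fun k _ => hmarginal k, sum_const, card_univ, nsmul_eq_mul]
        ring

end Exchangeable

theorem ofReal_one_sub_le_of_measure_compl_le {Ω : Type*} [MeasurableSpace Ω] {μ : Measure Ω}
    [IsProbabilityMeasure μ] {s : Set Ω} {α : ℝ} (hα : 0 ≤ α) (h : μ sᶜ ≤ ENNReal.ofReal α) :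
    ENNReal.ofReal (1 - α) ≤ μ s := by
  rw [ENNReal.ofReal_sub _ hα, ENNReal.ofReal_one, tsub_le_iff_right, ← measure_univ (μ := μ)]
  exact (measure_univ_le_add_compl s).trans (add_le_add le_rfl h)

theorem robust_conformal_marginal_coverage_general
    {𝒳 𝒴 : Type*} [MeasurableSpace 𝒳] [MeasurableSpace 𝒴]
    (n : ℕ) (P : Measure (𝒳 × 𝒴)) [IsProbabilityMeasure P]
    (w : 𝒳 × 𝒴 → ℝ) (hw : Measurable w)
    (Pt : Measure (𝒳 × 𝒴)) [IsProbabilityMeasure Pt]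
    (hPt : Pt = P.withDensity (fun z => ENNReal.ofReal (w z)))
    (V : 𝒳 × 𝒴 → ℝ) (hV : Measurable V)
    (lh uh : 𝒳 → ℝ) (hlh : Measurable lh) (huh : Measurable uh)
    (hlpos : ∀ x, 0 < lh x) (hlu : ∀ x, lh x ≤ uh x)
    (hbound : ∀ᵐ z ∂P, lh z.1 ≤ w z ∧ w z ≤ uh z.1)
    (α : ℝ) (hα : 0 < α ∧ α < 1) :
    ENNReal.ofReal (1 - α)
      ≤ ((Measure.pi fun _ : Fin n => P).prod Pt)
          {p : (Fin n → 𝒳 × 𝒴) × (𝒳 × 𝒴) | Covered n V lh uh α p.1 p.2} := by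
  set snoc : (Fin n → 𝒳 × 𝒴) × (𝒳 × 𝒴) → Fin (n + 1) → 𝒳 × 𝒴 := fun p => Fin.snoc p.1 p.2
  set E := {s : Fin (n + 1) → 𝒳 × 𝒴 |
    1 - α ≤ scoreRatio V (fun z => lh z.1) (fun z => uh z.1) s (V (s (Fin.last n)))}
  have hE : MeasurableSet E := measurableSet_one_sub_le_scoreRatio hV
    (hlh.comp measurable_fst) (huh.comp measurable_fst) α (Fin.last n)
  have hg : Measurable fun z => ENNReal.ofReal (w z) := ENNReal.measurable_ofReal.comp hw
  have hmiss : {p | Covered n V lh uh α p.1 p.2}ᶜ ⊆ snoc ⁻¹' E := fun p hp => by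
    change 1 - α ≤ scoreRatio _ _ _ (snoc p) (V (snoc p (Fin.last n)))
    simp only [snoc, Fin.snoc_last, scoreRatio_snoc]
    exact one_sub_le_weightRatio_of_not_covered hlpos hlu hp
  have hmass : ∫⁻ z, ENNReal.ofReal (w z) ∂P = 1 := by
    rw [← setLIntegral_univ, ← withDensity_apply _ MeasurableSet.univ, ← hPt, measure_univ]
  refine ofReal_one_sub_le_of_measure_compl_le hα.1.le ((measure_mono hmiss).trans ?_)
  calc ((Measure.pi fun _ : Fin n => P).prod Pt) (snoc ⁻¹' E)
      = ∫⁻ s in E, ENNReal.ofReal (w (s (Fin.last n))) ∂Measure.pi fun _ => P := by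
        rw [hPt, prod_withDensity_snoc_preimage P hg hE]
    _ ≤ ENNReal.ofReal α * ∫⁻ z, ENNReal.ofReal (w z) ∂P :=
        setLIntegral_one_sub_le_scoreRatio_le P hV (hlh.comp measurable_fst)
          (huh.comp measurable_fst) hw (fun z => (hlpos z.1).le) hbound hα.1.le hα.2 (Fin.last n)
    _ = ENNReal.ofReal α := by rw [hmass, mul_one]

/-- Theorem 1 of the paper, exact case: if `ℓ̂(X) ≤ w(X,Y) ≤ û(X)`
`P`-almost surely, where `w = dP̃/dP`, then the robust weighted conformal prediction set
covers an independent test point from `P̃` with probability at least `1 - α`, the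
probability being over the i.i.d. calibration sample from `P` and the test point. -/
theorem robust_conformal_marginal_coverage
    {𝒳 𝒴 : Type*} [MeasurableSpace 𝒳] [MeasurableSpace 𝒴]
    (n : ℕ) (P : Measure (𝒳 × 𝒴)) [IsProbabilityMeasure P]
    (w : 𝒳 × 𝒴 → ℝ) (hw : Measurable w) (hw0 : ∀ z, 0 ≤ w z)
    (Pt : Measure (𝒳 × 𝒴)) [IsProbabilityMeasure Pt]
    (hPt : Pt = P.withDensity (fun z => ENNReal.ofReal (w z)))
    (V : 𝒳 × 𝒴 → ℝ) (hV : Measurable V)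
    (lh uh : 𝒳 → ℝ) (hlh : Measurable lh) (huh : Measurable uh)
    (hlpos : ∀ x, 0 < lh x) (hlu : ∀ x, lh x ≤ uh x)
    (hbound : ∀ᵐ z ∂P, lh z.1 ≤ w z ∧ w z ≤ uh z.1)
    (α : ℝ) (hα : 0 < α ∧ α < 1) :
    ENNReal.ofReal (1 - α)
      ≤ ((Measure.pi fun _ : Fin n => P).prod Pt)
          {p : (Fin n → 𝒳 × 𝒴) × (𝒳 × 𝒴) | Covered n V lh uh α p.1 p.2} :=
  robust_conformal_marginal_coverage_general n P w hw Pt hPt V hV lh uh hlh huh hlpos hlu hbound α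
    hα
end

section
/- Let P be a probability distribution on 𝒳×𝒴, V a measurable score, and ℓ, u nonnegative measurable functions of x with ℓ ≤ u, E[ℓ(X)] ≤ 1 ≤ E[u(X)]. Define the identification set 𝒫(P,ℓ,u) of distributions P̃ whose likelihood ratio dP̃/dP(x,y) lies in [ℓ(x), u(x)] P-a.s. Then for every t ∈ ℝ, inf over P̃ ∈ 𝒫(P,ℓ,u) of P̃(V(X,Y) ≤ t) equals max{ E[1{V(X,Y)≤t}·ℓ(X)], 1 − E[1{V(X,Y)>t}·u(X)] }, and the infimum is attained by some element of 𝒫(P,ℓ,u). -/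
open MeasureTheory Set

/-!
With `A = {V ≤ t}`, every admissible density `h` satisfies `∫_A h ≥ ∫_A ℓ` and
`∫_A h = 1 - ∫_{Aᶜ} h ≥ 1 - ∫_{Aᶜ} u`. The larger of the two bounds is attained by a density equal
to `ℓ` on `A` (if `∫_A ℓ + ∫_{Aᶜ} u ≥ 1`) or to `u` on `Aᶜ` (otherwise), the remaining mass being
placed on the other piece by a fixed convex combination of `ℓ` and `u`.
-/

section Sandwich

variable {α : Type*} [MeasurableSpace α] {μ : Measure α} {lo hi : α → ℝ} {s : Set α}

theorem max_le_setIntegral_of_ae_le_le (hs : MeasurableSet s) (hlo : Integrable lo μ)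
    (hhi : Integrable hi μ) {h : α → ℝ} (hh : AEStronglyMeasurable h μ)
    (hbd : ∀ᵐ z ∂μ, lo z ≤ h z ∧ h z ≤ hi z) :
    max (∫ z in s, lo z ∂μ) (∫ z, h z ∂μ - ∫ z in sᶜ, hi z ∂μ) ≤ ∫ z in s, h z ∂μ := by
  have hlo_h : lo ≤ᵐ[μ] h := hbd.mono fun _ hz ↦ hz.1
  have hh_hi : h ≤ᵐ[μ] hi := hbd.mono fun _ hz ↦ hz.2
  have hint : Integrable h μ := integrable_of_le_of_le hh hlo_h hh_hi hlo hhi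
  refine max_le (setIntegral_mono_ae hlo.integrableOn hint.integrableOn hlo_h) ?_
  have := setIntegral_mono_ae (s := sᶜ) hint.integrableOn hhi.integrableOn hh_hi
  linarith [integral_add_compl hs hint]

theorem exists_le_le_setIntegral_eq (hlo : Measurable lo) (hhi : Measurable hi)
    (hloi : Integrable lo μ) (hhii : Integrable hi μ) (hle : ∀ z, lo z ≤ hi z) {x : ℝ}
    (hx : x ∈ Icc (∫ z in s, lo z ∂μ) (∫ z in s, hi z ∂μ)) :
    ∃ g : α → ℝ, Measurable g ∧ Integrable g μ ∧ (∀ z, lo z ≤ g z ∧ g z ≤ hi z) ∧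
      ∫ z in s, g z ∂μ = x := by
  obtain ⟨θ, ⟨hθ0, hθ1⟩, rfl⟩ :
      ∃ θ ∈ Icc (0 : ℝ) 1, ∫ z in s, lo z ∂μ + θ * (∫ z in s, hi z ∂μ - ∫ z in s, lo z ∂μ) = x := by
    have hseg := Icc_subset_segment (𝕜 := ℝ) hx
    rw [segment_eq_image_lineMap] at hseg
    obtain ⟨θ, hθ, hθx⟩ := hseg
    exact ⟨θ, hθ, by rw [← hθx, AffineMap.lineMap_apply_ring']; ring⟩
  refine ⟨fun z ↦ lo z + θ * (hi z - lo z), by fun_prop, hloi.add ((hhii.sub hloi).const_mul θ),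
    fun z ↦ ⟨?_, ?_⟩, ?_⟩
  · nlinarith [hle z]
  · nlinarith [hle z]
  · have hgap : Integrable (fun z ↦ hi z - lo z) μ := hhii.sub hloi
    rw [integral_add hloi.integrableOn (hgap.integrableOn.const_mul θ), integral_const_mul,
      integral_sub hhii.integrableOn hloi.integrableOn]

theorem exists_le_le_integral_eq_setIntegral_le_max (hs : MeasurableSet s) (hlo : Measurable lo)
    (hhi : Measurable hi) (hloi : Integrable lo μ) (hhii : Integrable hi μ)
    (hle : ∀ z, lo z ≤ hi z) {m : ℝ} (hm_lo : ∫ z, lo z ∂μ ≤ m) (hm_hi : m ≤ ∫ z, hi z ∂μ) :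
    ∃ h : α → ℝ, Measurable h ∧ (∀ z, lo z ≤ h z ∧ h z ≤ hi z) ∧ ∫ z, h z ∂μ = m ∧
      ∫ z in s, h z ∂μ ≤ max (∫ z in s, lo z ∂μ) (m - ∫ z in sᶜ, hi z ∂μ) := by
  suffices ∃ g₁ g₂ : α → ℝ, Measurable g₁ ∧ Measurable g₂ ∧ Integrable g₁ μ ∧ Integrable g₂ μ ∧
      (∀ z, lo z ≤ g₁ z ∧ g₁ z ≤ hi z) ∧ (∀ z, lo z ≤ g₂ z ∧ g₂ z ≤ hi z) ∧
      ∫ z in s, g₁ z ∂μ + ∫ z in sᶜ, g₂ z ∂μ = m ∧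
      ∫ z in s, g₁ z ∂μ ≤ max (∫ z in s, lo z ∂μ) (m - ∫ z in sᶜ, hi z ∂μ) by
    classical
    obtain ⟨g₁, g₂, hg₁, hg₂, hg₁i, hg₂i, hbd₁, hbd₂, hsum, hmax⟩ := this
    refine ⟨s.piecewise g₁ g₂, hg₁.piecewise hs hg₂, fun z ↦ ?_, ?_, ?_⟩
    · by_cases hz : z ∈ s
      · simpa [hz] using hbd₁ z
      · simpa [hz] using hbd₂ z
    · rwa [integral_piecewise hs hg₁i.integrableOn hg₂i.integrableOn]
    · rwa [setIntegral_congr_fun hs fun z hz ↦ s.piecewise_eq_of_mem g₁ g₂ hz]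
  have hlo_split := integral_add_compl hs hloi
  have hhi_split := integral_add_compl hs hhii
  rcases le_total m (∫ z in s, lo z ∂μ + ∫ z in sᶜ, hi z ∂μ) with hm | hm
  · obtain ⟨g, hg, hgi, hbd, hgs⟩ := exists_le_le_setIntegral_eq (s := sᶜ) hlo hhi hloi hhii hle
      (x := m - ∫ z in s, lo z ∂μ) ⟨by linarith, by linarith⟩
    exact ⟨lo, g, hlo, hg, hloi, hgi, fun z ↦ ⟨le_rfl, hle z⟩, hbd, by linarith, le_max_left _ _⟩
  · obtain ⟨g, hg, hgi, hbd, hgs⟩ := exists_le_le_setIntegral_eq (s := s) hlo hhi hloi hhii hle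
      (x := m - ∫ z in sᶜ, hi z ∂μ) ⟨by linarith, by linarith⟩
    exact ⟨g, hi, hg, hhi, hgi, hhii, hbd, fun z ↦ ⟨hle z, le_rfl⟩, by linarith,
      hgs.trans_le (le_max_right _ _)⟩

theorem isLeast_setIntegral_of_ae_le_le (hs : MeasurableSet s) (hlo : Measurable lo)
    (hhi : Measurable hi) (hloi : Integrable lo μ) (hhii : Integrable hi μ)
    (hle : ∀ z, lo z ≤ hi z) {m : ℝ} (hm_lo : ∫ z, lo z ∂μ ≤ m) (hm_hi : m ≤ ∫ z, hi z ∂μ) :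
    IsLeast
      {r : ℝ | ∃ h : α → ℝ, Measurable h ∧ (∀ᵐ z ∂μ, lo z ≤ h z ∧ h z ≤ hi z) ∧
        ∫ z, h z ∂μ = m ∧ r = ∫ z in s, h z ∂μ}
      (max (∫ z in s, lo z ∂μ) (m - ∫ z in sᶜ, hi z ∂μ)) := by
  have hlower : ∀ h : α → ℝ, Measurable h → (∀ᵐ z ∂μ, lo z ≤ h z ∧ h z ≤ hi z) →
      ∫ z, h z ∂μ = m → max (∫ z in s, lo z ∂μ) (m - ∫ z in sᶜ, hi z ∂μ) ≤ ∫ z in s, h z ∂μ :=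
    fun h hh hbd hm ↦ hm ▸ max_le_setIntegral_of_ae_le_le hs hloi hhii hh.aestronglyMeasurable hbd
  obtain ⟨h, hh, hbd, hm, hmax⟩ :=
    exists_le_le_integral_eq_setIntegral_le_max hs hlo hhi hloi hhii hle hm_lo hm_hi
  refine ⟨⟨h, hh, ae_of_all _ hbd, hm, (hlower h hh (ae_of_all _ hbd) hm).antisymm hmax⟩, ?_⟩
  rintro r ⟨h, hh, hbd, hm, rfl⟩
  exact hlower h hh hbd hm

end Sandwich

theorem worst_case_cdf_identification_set_general
    {𝒳 𝒴 : Type*} [MeasurableSpace 𝒳] [MeasurableSpace 𝒴]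
    (P : Measure (𝒳 × 𝒴))
    (V : 𝒳 × 𝒴 → ℝ) (hV : Measurable V)
    (l u : 𝒳 → ℝ) (hl : Measurable l) (hu : Measurable u)
    (hlu : ∀ x, l x ≤ u x)
    (hlint : Integrable (fun z => l z.1) P) (huint : Integrable (fun z => u z.1) P)
    (hEl : ∫ z, l z.1 ∂P ≤ 1) (hEu : 1 ≤ ∫ z, u z.1 ∂P)
    (t : ℝ) :
    IsLeast
      { r : ℝ | ∃ h : 𝒳 × 𝒴 → ℝ, Measurable h ∧
          (∀ᵐ z ∂P, l z.1 ≤ h z ∧ h z ≤ u z.1) ∧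
          (∫ z, h z ∂P = 1) ∧
          r = ∫ z, (if V z ≤ t then h z else 0) ∂P }
      (max (∫ z, (if V z ≤ t then l z.1 else 0) ∂P)
        (1 - ∫ z, (if t < V z then u z.1 else 0) ∂P)) := by
  have hA : MeasurableSet {z | V z ≤ t} := measurableSet_le hV measurable_const
  have h_le (f : 𝒳 × 𝒴 → ℝ) :
      ∫ z, (if V z ≤ t then f z else 0) ∂P = ∫ z in {z | V z ≤ t}, f z ∂P := by
    rw [← integral_indicator hA]; rfl
  have h_gt (f : 𝒳 × 𝒴 → ℝ) :
      ∫ z, (if t < V z then f z else 0) ∂P = ∫ z in {z | V z ≤ t}ᶜ, f z ∂P := by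
    simp only [Set.compl_ofPred, not_le]
    rw [← integral_indicator (measurableSet_lt measurable_const hV)]
    rfl
  simp only [h_le, h_gt]
  exact isLeast_setIntegral_of_ae_le_le hA (hl.comp measurable_fst) (hu.comp measurable_fst)
    hlint huint (fun z ↦ hlu z.1) hEl hEu

/-- Proposition 1 of the paper: the worst case of `P̃(V(X,Y) ≤ t)` over the
identification set `𝒫(P, ℓ, u) = {P̃ : ℓ(x) ≤ dP̃/dP(x,y) ≤ u(x) P-a.s.}` equals
`max{E[1{V ≤ t}·ℓ(X)], 1 - E[1{V > t}·u(X)]}`, and the infimum is attained. -/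
theorem worst_case_cdf_identification_set
    {𝒳 𝒴 : Type*} [MeasurableSpace 𝒳] [MeasurableSpace 𝒴]
    (P : Measure (𝒳 × 𝒴)) [IsProbabilityMeasure P]
    (V : 𝒳 × 𝒴 → ℝ) (hV : Measurable V)
    (l u : 𝒳 → ℝ) (hl : Measurable l) (hu : Measurable u)
    (hl0 : ∀ x, 0 ≤ l x) (hlu : ∀ x, l x ≤ u x)
    (hlint : Integrable (fun z => l z.1) P) (huint : Integrable (fun z => u z.1) P)
    (hEl : ∫ z, l z.1 ∂P ≤ 1) (hEu : 1 ≤ ∫ z, u z.1 ∂P)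
    (t : ℝ) :
    IsLeast
      { r : ℝ | ∃ h : 𝒳 × 𝒴 → ℝ, Measurable h ∧
          (∀ᵐ z ∂P, l z.1 ≤ h z ∧ h z ≤ u z.1) ∧
          (∫ z, h z ∂P = 1) ∧
          r = ∫ z, (if V z ≤ t then h z else 0) ∂P }
      (max (∫ z, (if V z ≤ t then l z.1 else 0) ∂P)
        (1 - ∫ z, (if t < V z then u z.1 else 0) ∂P)) :=
  worst_case_cdf_identification_set_general P V hV l u hl hu hlu hlint huint hEl hEu t
end

section
/- Let P be a distribution on 𝒳×𝒴 and let 𝒫(P, f, ℓ_0, u_0) be the set of distributions P̃ such that dP̃_X/dP_X = f and ℓ_0(x) ≤ dP̃_{Y|X}/dP_{Y|X}(y|x) ≤ u_0(x) P-a.s. With w*(x,y) as defined via the conditional quantile threshold q(τ(x);x,P) (with τ(x) = (u_0(x)−1)/(u_0(x)−ℓ_0(x)) and γ_0 chosen so that E[w*(x,Y)|X=x] = f(x)), for every t ∈ ℝ and every P̃ ∈ 𝒫(P, f, ℓ_0, u_0), E[1{V(X,Y)≤t}·w*(X,Y)] ≤ P̃(V(X,Y) ≤ t), with equality achieved by the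 distribution P* with dP*/dP = w*. -/
open MeasureTheory ProbabilityTheory

/-!
Fix `x`. Among conditional weights `w ∈ [ℓ₀(x), u₀(x)]` of conditional mean one, the step weight
`w*/f` puts the least mass on `{V ≤ t}`: if `t < q(x)` it equals `ℓ₀(x)` on all of `{V ≤ t}`,
and if `t ≥ q(x)` it equals `u₀(x)` on all of `{V > t}`, so it puts the most mass on the
complement while having the same total mass. Integrating these fiberwise inequalities against
`f ≥ 0` gives the bound, and the step weight itself is admissible, which gives equality.
-/

noncomputable def stepWeight (l γ u q v : ℝ) : ℝ :=
  if v < q then l else if v = q then γ else u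

section stepWeight

variable {l γ u q v : ℝ}

lemma stepWeight_of_lt (h : v < q) : stepWeight l γ u q v = l := if_pos h

lemma stepWeight_of_gt (h : q < v) : stepWeight l γ u q v = u := by
  rw [stepWeight, if_neg h.not_gt, if_neg h.ne']

lemma stepWeight_mem_Icc (hlγ : l ≤ γ) (hγu : γ ≤ u) : stepWeight l γ u q v ∈ Set.Icc l u := by
  unfold stepWeight
  split_ifs
  exacts [⟨le_rfl, hlγ.trans hγu⟩, ⟨hlγ, hγu⟩, ⟨hlγ.trans hγu, le_rfl⟩]

lemma stepWeight_pos (hl : 0 < l) (hlγ : l ≤ γ) (hγu : γ ≤ u) : 0 < stepWeight l γ u q v :=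
  hl.trans_le (stepWeight_mem_Icc hlγ hγu).1

end stepWeight

section Fiber

variable {α : Type*} [MeasurableSpace α] {μ : Measure α}

lemma integral_ite_le_of_integral_eq {p : α → Prop} [DecidablePred p] {s w : α → ℝ}
    (hs : Integrable s μ) (hw : Integrable w μ)
    (hps : Integrable (fun a => if p a then s a else 0) μ)
    (hpw : Integrable (fun a => if p a then w a else 0) μ)
    (heq : ∫ a, s a ∂μ = ∫ a, w a ∂μ) (hle : ∀ᵐ a ∂μ, ¬ p a → w a ≤ s a) :
    ∫ a, (if p a then s a else 0) ∂μ ≤ ∫ a, (if p a then w a else 0) ∂μ := by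
  have hcompl : ∫ a, (w a - if p a then w a else 0) ∂μ ≤ ∫ a, (s a - if p a then s a else 0) ∂μ :=
    integral_mono_ae (hw.sub hpw) (hs.sub hps) <| hle.mono fun a ha => by
      by_cases h : p a <;> simp [h, ha]
  rw [integral_sub hw hpw, integral_sub hs hps, heq] at hcompl
  linarith

lemma integral_ite_mul_stepWeight_le {v w : α → ℝ} {c l γ u q t : ℝ} (hc : 0 ≤ c)
    (hw : ∀ᵐ a ∂μ, l ≤ w a ∧ w a ≤ u)
    (hsi : Integrable (fun a => stepWeight l γ u q (v a)) μ) (hwi : Integrable w μ)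
    (heq : ∫ a, stepWeight l γ u q (v a) ∂μ = ∫ a, w a ∂μ)
    (hps : Integrable (fun a => if v a ≤ t then c * stepWeight l γ u q (v a) else 0) μ)
    (hpw : Integrable (fun a => if v a ≤ t then c * w a else 0) μ) :
    ∫ a, (if v a ≤ t then c * stepWeight l γ u q (v a) else 0) ∂μ
      ≤ ∫ a, (if v a ≤ t then c * w a else 0) ∂μ := by
  rcases lt_or_ge t q with htq | hqt
  · refine integral_mono_ae hps hpw (hw.mono fun a ha => ?_)
    dsimp only
    split_ifs with hvt
    · rw [stepWeight_of_lt (hvt.trans_lt htq)]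
      exact mul_le_mul_of_nonneg_left ha.1 hc
    · exact le_rfl
  · refine integral_ite_le_of_integral_eq (hsi.const_mul c) (hwi.const_mul c) hps hpw
      (by rw [integral_const_mul, integral_const_mul, heq]) (hw.mono fun a ha hvt => ?_)
    rw [stepWeight_of_gt (hqt.trans_lt (not_le.mp hvt))]
    exact mul_le_mul_of_nonneg_left ha.2 hc

end Fiber

section CompProd

variable {𝒳 𝒴 : Type*} [MeasurableSpace 𝒳] [MeasurableSpace 𝒴]

lemma aemeasurable_of_aemeasurable_map_prodMk {μ : Measure 𝒳} {κ : 𝒳 → Measure 𝒴}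
    (h : AEMeasurable (fun x => (κ x).map (fun y => (x, y))) μ) : AEMeasurable κ μ := by
  convert (Measure.measurable_map _ measurable_snd).comp_aemeasurable h using 1
  funext x
  rw [Function.comp_apply, Measure.map_map measurable_snd measurable_prodMk_left]
  exact Measure.map_id.symm

lemma AEMeasurable.exists_isMarkovKernel_ae_eq [Nonempty 𝒳] {μ : Measure 𝒳}
    {κ : 𝒳 → Measure 𝒴} (hκ : ∀ x, IsProbabilityMeasure (κ x)) (hκm : AEMeasurable κ μ) :
    ∃ η : Kernel 𝒳 𝒴, IsMarkovKernel η ∧ ∀ᵐ x ∂μ, η x = κ x := by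
  classical
  -- repair the measurable version of `κ` where it fails to be a probability measure
  let S : Set 𝒳 := {x | hκm.mk κ x Set.univ = 1}
  have hS : MeasurableSet S :=
    (Measure.measurable_coe MeasurableSet.univ).comp hκm.measurable_mk (measurableSet_singleton 1)
  let η : Kernel 𝒳 𝒴 :=
    ⟨S.piecewise (hκm.mk κ) fun _ => κ (Classical.arbitrary 𝒳),
      hκm.measurable_mk.piecewise hS measurable_const⟩
  refine ⟨η, ⟨fun x => ⟨?_⟩⟩, ?_⟩
  · by_cases hx : x ∈ S
    · simpa [η, S, Set.piecewise_eq_of_mem _ _ _ hx] using hx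
    · simp [η, Set.piecewise_eq_of_notMem _ _ _ hx]
  · filter_upwards [hκm.ae_eq_mk] with x hx
    have hxS : x ∈ S := by simp [S, ← hx]
    simp [η, Set.piecewise_eq_of_mem _ _ _ hxS, hx]

lemma MeasureTheory.Measure.bind_map_prodMk_eq_compProd {μ : Measure 𝒳} [SFinite μ]
    {κ : 𝒳 → Measure 𝒴} {η : Kernel 𝒳 𝒴} [IsSFiniteKernel η] (h : ∀ᵐ x ∂μ, η x = κ x) :
    μ.bind (fun x => (κ x).map (fun y => (x, y))) = μ ⊗ₘ η := by
  rw [Measure.compProd_eq_comp_prod]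
  refine Measure.bind_congr_right (h.mono fun x hx => ?_)
  rw [Kernel.prod_apply, Kernel.id_apply, Measure.dirac_prod, hx]

variable {μ : Measure 𝒳} [SFinite μ] {η : Kernel 𝒳 𝒴} [IsSFiniteKernel η]

lemma integral_compProd_nonneg_of_ae {g : 𝒳 × 𝒴 → ℝ}
    (h : ∀ᵐ x ∂μ, Integrable (fun y => g (x, y)) (η x) → 0 ≤ ∫ y, g (x, y) ∂η x) :
    0 ≤ ∫ z, g z ∂(μ ⊗ₘ η) := by
  by_cases hg : Integrable g (μ ⊗ₘ η)
  · rw [Measure.integral_compProd hg]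
    refine integral_nonneg_of_ae ?_
    filter_upwards [h, ((Measure.integrable_compProd_iff hg.1).mp hg).1] with x hx hgx
    exact hx hgx
  · rw [integral_undef hg]

lemma integral_ite_mul_stepWeight_le_compProd {V : 𝒳 → 𝒴 → ℝ} {f l γ u q : 𝒳 → ℝ}
    {w : 𝒳 → 𝒴 → ℝ} {t : ℝ} (hf : ∀ x, 0 ≤ f x) (hl : ∀ x, 0 < l x)
    (hγ : ∀ x, l x ≤ γ x ∧ γ x ≤ u x)
    (hw : ∀ᵐ x ∂μ, ∀ᵐ y ∂η x, l x ≤ w x y ∧ w x y ≤ u x)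
    (hs_mean : ∀ᵐ x ∂μ, ∫ y, stepWeight (l x) (γ x) (u x) (q x) (V x y) ∂η x = 1)
    (hw_mean : ∀ᵐ x ∂μ, ∫ y, w x y ∂η x = 1)
    (hfw : Integrable (fun z : 𝒳 × 𝒴 => f z.1 * w z.1 z.2) (μ ⊗ₘ η)) :
    ∫ z, (if V z.1 z.2 ≤ t then
        f z.1 * stepWeight (l z.1) (γ z.1) (u z.1) (q z.1) (V z.1 z.2) else 0) ∂(μ ⊗ₘ η)
      ≤ ∫ z, (if V z.1 z.2 ≤ t then f z.1 * w z.1 z.2 else 0) ∂(μ ⊗ₘ η) := by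
  set g₁ : 𝒳 × 𝒴 → ℝ := fun z => if V z.1 z.2 ≤ t then
    f z.1 * stepWeight (l z.1) (γ z.1) (u z.1) (q z.1) (V z.1 z.2) else 0
  set g₂ : 𝒳 × 𝒴 → ℝ := fun z => if V z.1 z.2 ≤ t then f z.1 * w z.1 z.2 else 0
  by_cases hg₁ : Integrable g₁ (μ ⊗ₘ η)
  swap
  · rw [integral_undef hg₁]
    refine integral_compProd_nonneg_of_ae (hw.mono fun x hx _ => integral_nonneg_of_ae ?_)
    filter_upwards [hx] with y hy
    split_ifs
    exacts [mul_nonneg (hf x) ((hl x).le.trans hy.1), le_rfl]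
  -- the step weight is positive, so `{V ≤ t}` and `support g₁` agree wherever `f ≠ 0`
  have hg₂ : Integrable g₂ (μ ⊗ₘ η) := by
    have hsupp : g₂ = (Function.support g₁).indicator fun z => f z.1 * w z.1 z.2 := by
      funext z
      have hstep : 0 < stepWeight (l z.1) (γ z.1) (u z.1) (q z.1) (V z.1 z.2) :=
        stepWeight_pos (hl z.1) (hγ z.1).1 (hγ z.1).2
      by_cases hvt : V z.1 z.2 ≤ t <;> by_cases hfz : f z.1 = 0 <;>
        simp [g₁, g₂, hvt, hfz, hstep.ne']
    rw [hsupp]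
    exact hfw.indicator₀ (hg₁.1.nullMeasurableSet_eq_fun aestronglyMeasurable_const).compl
  rw [← sub_nonneg, ← integral_sub hg₂ hg₁]
  refine integral_compProd_nonneg_of_ae ?_
  filter_upwards [((Measure.integrable_compProd_iff hg₁.1).mp hg₁).1,
    ((Measure.integrable_compProd_iff hg₂.1).mp hg₂).1, hw, hs_mean, hw_mean]
    with x h₁ h₂ hwb hsm hwm _
  rw [integral_sub h₂ h₁, sub_nonneg]
  exact integral_ite_mul_stepWeight_le (hf x) hwb (.of_integral_ne_zero (by simp [hsm]))
    (.of_integral_ne_zero (by simp [hwm])) (hsm.trans hwm.symm) h₁ h₂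

end CompProd

theorem worst_case_cdf_counterfactual_general
    {𝒳 𝒴 : Type*} [MeasurableSpace 𝒳] [MeasurableSpace 𝒴]
    (PX : Measure 𝒳) [IsProbabilityMeasure PX]
    (κ : 𝒳 → Measure 𝒴) (hκ : ∀ x, IsProbabilityMeasure (κ x))
    (P : Measure (𝒳 × 𝒴))
    (hP : P = PX.bind (fun x => (κ x).map (fun y => (x, y))))
    (V : 𝒳 → 𝒴 → ℝ)
    (f l0 u0 q γ0 : 𝒳 → ℝ)
    (hf : ∀ x, 0 ≤ f x)
    (hl : ∀ x, 0 < l0 x ∧ l0 x ≤ 1)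
    -- γ₀ is chosen in [ℓ₀, u₀] so that the conditional mean of w*/f is 1
    (hγbd : ∀ x, l0 x ≤ γ0 x ∧ γ0 x ≤ u0 x)
    (hγmean : ∀ᵐ x ∂PX,
      ∫ y, (if V x y < q x then l0 x else if V x y = q x then γ0 x else u0 x) ∂(κ x) = 1)
    (wstar : 𝒳 × 𝒴 → ℝ)
    (hws : ∀ z : 𝒳 × 𝒴, wstar z =
      f z.1 * (if V z.1 z.2 < q z.1 then l0 z.1
               else if V z.1 z.2 = q z.1 then γ0 z.1 else u0 z.1))
    (t : ℝ) :
    (∀ w0 : 𝒳 → 𝒴 → ℝ,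
        (∀ᵐ x ∂PX, ∀ᵐ y ∂(κ x), l0 x ≤ w0 x y ∧ w0 x y ≤ u0 x) →
        (∀ᵐ x ∂PX, ∫ y, w0 x y ∂(κ x) = 1) →
        Integrable (fun z : 𝒳 × 𝒴 => f z.1 * w0 z.1 z.2) P →
        ∫ z, (if V z.1 z.2 ≤ t then wstar z else 0) ∂P
          ≤ ∫ z : 𝒳 × 𝒴, (if V z.1 z.2 ≤ t then f z.1 * w0 z.1 z.2 else 0) ∂P) ∧
    (∃ w0 : 𝒳 → 𝒴 → ℝ,
        (∀ᵐ x ∂PX, ∀ᵐ y ∂(κ x), l0 x ≤ w0 x y ∧ w0 x y ≤ u0 x) ∧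
        (∀ᵐ x ∂PX, ∫ y, w0 x y ∂(κ x) = 1) ∧
        ∫ z, (if V z.1 z.2 ≤ t then wstar z else 0) ∂P
          = ∫ z : 𝒳 × 𝒴, (if V z.1 z.2 ≤ t then f z.1 * w0 z.1 z.2 else 0) ∂P) := by
  have hwstar : wstar = fun z => f z.1 *
      stepWeight (l0 z.1) (γ0 z.1) (u0 z.1) (q z.1) (V z.1 z.2) := funext hws
  refine ⟨fun w0 hbd hmean hint => ?_,
    fun x y => stepWeight (l0 x) (γ0 x) (u0 x) (q x) (V x y),
    .of_forall fun x => .of_forall fun _ => stepWeight_mem_Icc (hγbd x).1 (hγbd x).2,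
    hγmean, by rw [hwstar]⟩
  by_cases hF : AEMeasurable (fun x => (κ x).map (fun y => (x, y))) PX
  swap
  · simp [hP, Measure.bind, Measure.map_of_not_aemeasurable hF]
  have : Nonempty 𝒳 := PX.nonempty_of_neZero
  obtain ⟨η, _, hηκ⟩ :=
    (aemeasurable_of_aemeasurable_map_prodMk hF).exists_isMarkovKernel_ae_eq hκ
  rw [hP, Measure.bind_map_prodMk_eq_compProd hηκ] at hint ⊢
  rw [hwstar]
  exact integral_ite_mul_stepWeight_le_compProd hf (fun x => (hl x).1) hγbd
    ((hbd.and hηκ).mono fun x ⟨h, e⟩ => e ▸ h) ((hγmean.and hηκ).mono fun x ⟨h, e⟩ => e ▸ h)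
    ((hmean.and hηκ).mono fun x ⟨h, e⟩ => e ▸ h) hint

/-- Proposition 4 of the paper: for every `t`, the worst-case value
`E[1{V(X,Y) ≤ t}·w*(X,Y)]` lower-bounds `P̃(V(X,Y) ≤ t)` for every `P̃` in the
identification set `𝒫(P, f, ℓ₀, u₀)` (i.e. `dP̃_X/dP_X = f` and
`ℓ₀(x) ≤ dP̃_{Y|X}/dP_{Y|X}(y|x) ≤ u₀(x)` a.s.), with equality achieved by the member of
the identification set whose density with respect to `P` is `w*`. -/
theorem worst_case_cdf_counterfactual
    {𝒳 𝒴 : Type*} [MeasurableSpace 𝒳] [MeasurableSpace 𝒴]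
    (PX : Measure 𝒳) [IsProbabilityMeasure PX]
    (κ : 𝒳 → Measure 𝒴) (hκ : ∀ x, IsProbabilityMeasure (κ x))
    (P : Measure (𝒳 × 𝒴))
    (hP : P = PX.bind (fun x => (κ x).map (fun y => (x, y))))
    (V : 𝒳 → 𝒴 → ℝ)
    (f l0 u0 τ q γ0 : 𝒳 → ℝ)
    (hf : ∀ x, 0 ≤ f x) (hfmean : ∫ x, f x ∂PX = 1)
    (hl : ∀ x, 0 < l0 x ∧ l0 x ≤ 1) (hu : ∀ x, 1 ≤ u0 x) (hlu : ∀ x, l0 x < u0 x)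
    (hτ : ∀ x, τ x = (u0 x - 1) / (u0 x - l0 x))
    -- q(x) is the conditional τ(x)-quantile of V(x, Y) under P
    (hq : ∀ x, q x = sInf {z : ℝ | τ x ≤ (κ x {y | V x y ≤ z}).toReal})
    -- γ₀ is chosen in [ℓ₀, u₀] so that the conditional mean of w*/f is 1
    (hγbd : ∀ x, l0 x ≤ γ0 x ∧ γ0 x ≤ u0 x)
    (hγmean : ∀ᵐ x ∂PX,
      ∫ y, (if V x y < q x then l0 x else if V x y = q x then γ0 x else u0 x) ∂(κ x) = 1)
    (wstar : 𝒳 × 𝒴 → ℝ)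
    (hws : ∀ z : 𝒳 × 𝒴, wstar z =
      f z.1 * (if V z.1 z.2 < q z.1 then l0 z.1
               else if V z.1 z.2 = q z.1 then γ0 z.1 else u0 z.1))
    (hwsint : Integrable wstar P)
    (t : ℝ) :
    (∀ w0 : 𝒳 → 𝒴 → ℝ,
        (∀ᵐ x ∂PX, ∀ᵐ y ∂(κ x), l0 x ≤ w0 x y ∧ w0 x y ≤ u0 x) →
        (∀ᵐ x ∂PX, ∫ y, w0 x y ∂(κ x) = 1) →
        Integrable (fun z : 𝒳 × 𝒴 => f z.1 * w0 z.1 z.2) P →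
        ∫ z, (if V z.1 z.2 ≤ t then wstar z else 0) ∂P
          ≤ ∫ z : 𝒳 × 𝒴, (if V z.1 z.2 ≤ t then f z.1 * w0 z.1 z.2 else 0) ∂P) ∧
    (∃ w0 : 𝒳 → 𝒴 → ℝ,
        (∀ᵐ x ∂PX, ∀ᵐ y ∂(κ x), l0 x ≤ w0 x y ∧ w0 x y ≤ u0 x) ∧
        (∀ᵐ x ∂PX, ∫ y, w0 x y ∂(κ x) = 1) ∧
        ∫ z, (if V z.1 z.2 ≤ t then wstar z else 0) ∂P
          = ∫ z : 𝒳 × 𝒴, (if V z.1 z.2 ≤ t then f z.1 * w0 z.1 z.2 else 0) ∂P) :=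
  worst_case_cdf_counterfactual_general PX κ hκ P hP V f l0 u0 q γ0 hf hl hγbd hγmean wstar hws t
end
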